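/- Let α ∈ (0,1) and β ∈ ℝ. Then for every θ > 0 and every x > 0: |ξ_{α,β}(x;θ)| ≤ (|sin(βπ)| / (π sin²(απ)) + |sin((α−β)π)| / (2π (1 + cos(απ)))) · x^{−β}. -/

import Mathlib

open Real

/-- The density `ξ_{α,β}(x;θ)` of the Bernstein measure of the fractional resolvent:
`ξ_{α,β}(x;θ) = (1/π) (x^{2α−β} sin(βπ) − θ x^{α−β} sin((α−β)π))
                / (θ² + 2θ cos(απ) x^α + x^{2α})`. -/
noncomputable def xiFrac (α β x θ : ℝ) : ℝ :=
  (1 / Real.pi) *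
    ((x ^ (2 * α - β) * Real.sin (β * Real.pi)
        - θ * x ^ (α - β) * Real.sin ((α - β) * Real.pi)) /
      (θ ^ 2 + 2 * θ * Real.cos (α * Real.pi) * x ^ α + x ^ (2 * α)))

/- Writing `y = x^α`, the numerator of `ξ` is `x^{-β} (y² sin(βπ) − θ y sin((α−β)π))`, and the
denominator `D = θ² + 2θ cos(απ) y + y²` dominates both terms separately:
`D = (θ + cos(απ) y)² + sin²(απ) y² ≥ sin²(απ) y²` and `D = (θ − y)² + 2(1 + cos(απ)) θ y ≥ 2(1 + cos(απ)) θ y`. -/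

lemma sin_sq_mul_sq_le (a θ y : ℝ) :
    sin a ^ 2 * y ^ 2 ≤ θ ^ 2 + 2 * θ * cos a * y + y ^ 2 := by
  nlinarith [sq_nonneg (θ + cos a * y), sin_sq_add_cos_sq a]

lemma two_mul_one_add_cos_mul_le (a θ y : ℝ) :
    2 * (1 + cos a) * (θ * y) ≤ θ ^ 2 + 2 * θ * cos a * y + y ^ 2 := by
  nlinarith [sq_nonneg (θ - y)]

lemma abs_mul_sub_mul_div_le {u v p q A B D : ℝ} (hu : 0 ≤ u) (hv : 0 ≤ v)
    (hA : 0 < A) (hB : 0 < B) (hD : 0 < D) (huD : A * u ≤ D) (hvD : B * v ≤ D) :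
    |u * p - v * q| / D ≤ |p| / A + |q| / B := by
  have hup : u * |p| / D ≤ |p| / A := by
    rw [div_le_div_iff₀ hD hA]; nlinarith [abs_nonneg p]
  have hvq : v * |q| / D ≤ |q| / B := by
    rw [div_le_div_iff₀ hD hB]; nlinarith [abs_nonneg q]
  calc |u * p - v * q| / D ≤ (u * |p| + v * |q|) / D := by
        gcongr
        calc |u * p - v * q| ≤ |u * p| + |v * q| := abs_sub _ _
          _ = u * |p| + v * |q| := by rw [abs_mul, abs_mul, abs_of_nonneg hu, abs_of_nonneg hv]
    _ = u * |p| / D + v * |q| / D := add_div _ _ _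
    _ ≤ |p| / A + |q| / B := add_le_add hup hvq

lemma xiFrac_eq {α β x : ℝ} (θ : ℝ) (hx : 0 < x) :
    xiFrac α β x θ = x ^ (-β) / π *
      (((x ^ α) ^ 2 * sin (β * π) - θ * x ^ α * sin ((α - β) * π)) /
        (θ ^ 2 + 2 * θ * cos (α * π) * x ^ α + (x ^ α) ^ 2)) := by
  have h2α : x ^ (2 * α) = (x ^ α) ^ 2 := by rw [two_mul, rpow_add hx, sq]
  rw [xiFrac, h2α, sub_eq_add_neg (2 * α), sub_eq_add_neg α, rpow_add hx, rpow_add hx, h2α]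
  ring

/-- Let `α ∈ (0,1)` and `β ∈ ℝ`.  Then for every `θ > 0` and `x > 0`:
`|ξ_{α,β}(x;θ)| ≤ (|sin(βπ)|/(π sin²(απ)) + |sin((α−β)π)|/(2π(1+cos(απ)))) · x^{−β}`. -/
theorem xiFrac_bound_large_x
    (α β : ℝ) (hα : α ∈ Set.Ioo (0 : ℝ) 1)
    (θ x : ℝ) (hθ : 0 < θ) (hx : 0 < x) :
    |xiFrac α β x θ| ≤
      (|Real.sin (β * Real.pi)| / (Real.pi * Real.sin (α * Real.pi) ^ 2)
          + |Real.sin ((α - β) * Real.pi)| / (2 * Real.pi * (1 + Real.cos (α * Real.pi)))) *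
        x ^ (-β) := by
  obtain ⟨hα0, hα1⟩ := hα
  have hsin : 0 < sin (α * π) := sin_pos_of_pos_of_lt_pi (by positivity) (by nlinarith [pi_pos])
  have hcos : 0 < 1 + cos (α * π) := by nlinarith [sin_sq_add_cos_sq (α * π)]
  have hy : 0 < x ^ α := rpow_pos_of_pos hx α
  have hD : 0 < θ ^ 2 + 2 * θ * cos (α * π) * x ^ α + (x ^ α) ^ 2 :=
    (by positivity : 0 < sin (α * π) ^ 2 * (x ^ α) ^ 2).trans_le (sin_sq_mul_sq_le _ _ _)
  have hratio := abs_mul_sub_mul_div_le (p := sin (β * π)) (q := sin ((α - β) * π))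
    (by positivity) (by positivity) (by positivity) (by positivity) hD
    (sin_sq_mul_sq_le (α * π) θ (x ^ α)) (two_mul_one_add_cos_mul_le (α * π) θ (x ^ α))
  rw [xiFrac_eq θ hx, abs_mul, abs_of_pos (by positivity), abs_div, abs_of_pos hD]
  calc x ^ (-β) / π * (|(x ^ α) ^ 2 * sin (β * π) - θ * x ^ α * sin ((α - β) * π)| /
        (θ ^ 2 + 2 * θ * cos (α * π) * x ^ α + (x ^ α) ^ 2))
      ≤ x ^ (-β) / π * (|sin (β * π)| / sin (α * π) ^ 2
          + |sin ((α - β) * π)| / (2 * (1 + cos (α * π)))) := by gcongr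
    _ = _ := by field_simp
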